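/- arXiv:2007.11068 — 3 statements merged into one kernel-verified Lean document; each statement's English description precedes it below -/
import Mathlib

section
/- Let u : ℝ → ℝ be a strictly convex differentiable function such that there exists K'' > 1 with ((K''+1)/K'')·(u(y) − u(x) − u'(x)(y−x)) ≤ (u'(x) − u'(y))(x − y) for all x, y. Fix x ∈ ℝ and define u_x(s) = u(x+s) − u(x) − u'(x)·s. Then for every r > 0 and every y with |y| ≥ r, u_x(|y|) ≥ u_x(r)·(|y|/r)^((K''+1)/K''). -/
/-!
The hypothesis at the pair `(x, x + s)` says `c · uₓ(s) ≤ uₓ'(s) · s` with `c = (K + 1) / K`,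
i.e. `s ↦ uₓ(s) / s ^ c` has nonnegative derivative on `(0, ∞)`. Comparing its values at `r` and
at `|y| ≥ r` gives the bound.
-/

open Set

theorem monotoneOn_mul_rpow_neg_of_mul_le_deriv_mul {f f' : ℝ → ℝ} {c : ℝ}
    (hf : ∀ s ∈ Ioi (0 : ℝ), HasDerivAt f (f' s) s)
    (hineq : ∀ s ∈ Ioi (0 : ℝ), c * f s ≤ f' s * s) :
    MonotoneOn (fun s => f s * s ^ (-c)) (Ioi 0) := by
  have hderiv : ∀ s ∈ Ioi (0 : ℝ),
      HasDerivAt (fun s => f s * s ^ (-c)) (f' s * s ^ (-c) + f s * (-c * s ^ (-c - 1))) s :=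
    fun s hs => (hf s hs).mul (Real.hasDerivAt_rpow_const (Or.inl (ne_of_gt hs)))
  refine monotoneOn_of_hasDerivWithinAt_nonneg (convex_Ioi 0)
    (fun s hs => (hderiv s hs).continuousAt.continuousWithinAt)
    (fun s hs => (hderiv s (interior_subset hs)).hasDerivWithinAt) fun s hs => ?_
  rw [interior_Ioi] at hs
  have hs0 : (0 : ℝ) < s := hs
  have hpow : s ^ (-c) = s ^ (-c - 1) * s := by
    rw [← Real.rpow_add_one hs0.ne', sub_add_cancel]
  calc (0 : ℝ) ≤ s ^ (-c - 1) * (f' s * s - c * f s) :=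
        mul_nonneg (Real.rpow_pos_of_pos hs0 _).le (sub_nonneg.mpr (hineq s hs))
    _ = f' s * s ^ (-c) + f s * (-c * s ^ (-c - 1)) := by rw [hpow]; ring

theorem mul_div_rpow_le_of_mul_le_deriv_mul {f f' : ℝ → ℝ} {c r t : ℝ}
    (hf : ∀ s ∈ Ioi (0 : ℝ), HasDerivAt f (f' s) s)
    (hineq : ∀ s ∈ Ioi (0 : ℝ), c * f s ≤ f' s * s) (hr : 0 < r) (hrt : r ≤ t) :
    f r * (t / r) ^ c ≤ f t := by
  have ht : 0 < t := hr.trans_le hrt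
  have hmono := monotoneOn_mul_rpow_neg_of_mul_le_deriv_mul hf hineq hr ht hrt
  simp only [Real.rpow_neg hr.le, Real.rpow_neg ht.le, ← div_eq_mul_inv] at hmono
  calc f r * (t / r) ^ c = f r / r ^ c * t ^ c := by rw [Real.div_rpow ht.le hr.le]; ring
    _ ≤ f t / t ^ c * t ^ c := by gcongr
    _ = f t := div_mul_cancel₀ _ (Real.rpow_pos_of_pos ht c).ne'

theorem hasDerivAt_sub_sub_deriv_mul {u : ℝ → ℝ} {x s : ℝ} (hu : DifferentiableAt ℝ u (x + s)) :
    HasDerivAt (fun s => u (x + s) - u x - deriv u x * s) (deriv u (x + s) - deriv u x) s := by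
  have hshift : HasDerivAt (fun s => u (x + s)) (deriv u (x + s)) s := by
    simpa using hu.hasDerivAt.comp_const_add x s
  have hlin : HasDerivAt (fun s => deriv u x * s) (deriv u x) s := by
    simpa using (hasDerivAt_id s).const_mul (deriv u x)
  exact (hshift.sub_const (u x)).sub hlin

theorem stmt1_general (u : ℝ → ℝ)
    (hdiff : Differentiable ℝ u) (K : ℝ)
    (h : ∀ x y : ℝ,
      (K + 1) / K * (u y - u x - deriv u x * (y - x)) ≤ (deriv u x - deriv u y) * (x - y))
    (x : ℝ) :
    ∀ r : ℝ, 0 < r → ∀ y : ℝ, r ≤ |y| →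
      (u (x + r) - u x - deriv u x * r) * (|y| / r) ^ ((K + 1) / K) ≤
        u (x + |y|) - u x - deriv u x * |y| := by
  intro r hr y hy
  refine mul_div_rpow_le_of_mul_le_deriv_mul (fun s _ => hasDerivAt_sub_sub_deriv_mul (hdiff _))
    (fun s _ => ?_) hr hy
  have hxs := h x (x + s)
  rw [add_sub_cancel_left, sub_add_cancel_left] at hxs
  linarith

/-- Gronwall-type lower bound for the second-order increment of a convex function on ℝ. -/
theorem stmt1 (u : ℝ → ℝ) (hconv : StrictConvexOn ℝ Set.univ u)
    (hdiff : Differentiable ℝ u) (K : ℝ) (hK : 1 < K)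
    (h : ∀ x y : ℝ,
      (K + 1) / K * (u y - u x - deriv u x * (y - x)) ≤ (deriv u x - deriv u y) * (x - y))
    (x : ℝ) :
    ∀ r : ℝ, 0 < r → ∀ y : ℝ, r ≤ |y| →
      (u (x + r) - u x - deriv u x * r) * (|y| / r) ^ ((K + 1) / K) ≤
        u (x + |y|) - u x - deriv u x * |y| :=
  stmt1_general u hdiff K h x
end

section
/- Define the function u : ℝ² → ℝ by u(x,y) = x⁴ + 3y²/(2x²) if |y| ≤ |x|³ with x ≠ 0, u(0,0) = 0, and u(x,y) = (1/2)x²|y|^(2/3) + 2|y|^(4/3) if |y| > |x|³. Then u(0,0) = 0, ∇u(0,0) = (0,0), and for all r ≥ 1: min over ‖z‖ = r of u(z) ≤ 2r^(4/3), while max over ‖z‖ = r of u(z) ≥ r⁴. Consequently there is no constant H ≥ 1 such that M_u((0,0),r) ≤ H·m_u((0,0),r) for all r > 0, i.e., u does not have controlled slope at the origin. -/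
/-- Wang's example: a convex function on ℝ² with the engulfing property but
without controlled slope at the origin. -/
noncomputable def wangU (z : EuclideanSpace ℝ (Fin 2)) : ℝ :=
  if |z 1| ≤ |z 0| ^ 3 then (z 0) ^ 4 + 3 * (z 1) ^ 2 / (2 * (z 0) ^ 2)
  else (1 / 2) * (z 0) ^ 2 * |z 1| ^ ((2 : ℝ) / 3) + 2 * |z 1| ^ ((4 : ℝ) / 3)

noncomputable def zvW (a b : ℝ) : EuclideanSpace ℝ (Fin 2) := (WithLp.equiv 2 _).symm ![a, b]

lemma zvW0 (a b : ℝ) : (zvW a b) 0 = a := by simp [zvW]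
lemma zvW1 (a b : ℝ) : (zvW a b) 1 = b := by simp [zvW]

lemma coordW_le (z : EuclideanSpace ℝ (Fin 2)) (i : Fin 2) : |z i| ≤ ‖z‖ := by
  rw [EuclideanSpace.norm_eq]
  calc |z i| = Real.sqrt (‖z i‖^2) := by rw [Real.sqrt_sq_eq_abs]; simp
    _ ≤ _ := Real.sqrt_le_sqrt (Finset.single_le_sum (f := fun i => ‖z i‖^2)
        (fun i _ => by positivity) (Finset.mem_univ i))

lemma wang_nonneg (z : EuclideanSpace ℝ (Fin 2)) : 0 ≤ wangU z := by
  unfold wangU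
  split
  · positivity
  · positivity

lemma wang_zero : wangU 0 = 0 := by
  have h0 : ((0 : EuclideanSpace ℝ (Fin 2)) 0) = 0 := rfl
  have h1 : ((0 : EuclideanSpace ℝ (Fin 2)) 1) = 0 := rfl
  simp [wangU, h0, h1]

lemma wangA (r : ℝ) : wangU (zvW r 0) = r ^ 4 := by
  have h : |(0:ℝ)| ≤ |r| ^ 3 := by simp only [abs_zero]; positivity
  simp [wangU, zvW0, zvW1, h]

lemma wangB (r : ℝ) (hr : 1 ≤ r) : wangU (zvW 0 r) = 2 * r ^ ((4:ℝ)/3) := by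
  have h : ¬ |r| ≤ |(0:ℝ)| ^ 3 := by
    simp only [abs_zero]
    rw [abs_of_nonneg (by linarith : (0:ℝ) ≤ r)]
    norm_num; linarith
  simp [wangU, zvW0, zvW1, h, abs_of_nonneg (by linarith : (0:ℝ) ≤ r)]
  intro hle; exact absurd hle (by linarith)

lemma zvWA_norm (r : ℝ) (hr : 0 ≤ r) : ‖zvW r 0‖ = r := by
  have h : ‖zvW r 0‖ = Real.sqrt (r^2 + 0^2) := by
    simp [zvW, EuclideanSpace.norm_eq, Fin.sum_univ_two, sq_abs]
  rw [h]; simp [Real.sqrt_sq hr]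

lemma zvWB_norm (r : ℝ) (hr : 0 ≤ r) : ‖zvW 0 r‖ = r := by
  have h : ‖zvW 0 r‖ = Real.sqrt (0^2 + r^2) := by
    simp [zvW, EuclideanSpace.norm_eq, Fin.sum_univ_two, sq_abs]
  rw [h]; simp [Real.sqrt_sq hr]

lemma region1W (a b : ℝ) (h : |b| ≤ |a|^3) :
    a ^ 4 + 3 * b ^ 2 / (2 * a ^ 2) ≤ (5/2) * a^4 := by
  rcases eq_or_ne a 0 with rfl | ha
  · have hb : b = 0 := by
      have h' : |b| ≤ 0 := by simpa using h
      simpa using le_antisymm h' (abs_nonneg b)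
    simp [hb]
  · have hb2 : b^2 ≤ a^6 := by
      have h1 : |b| * |b| ≤ |a| ^ 3 * |a| ^ 3 := mul_le_mul h h (abs_nonneg b) (by positivity)
      have h2 : |a| ^ 3 * |a| ^ 3 = a ^ 6 := by rw [← abs_pow, abs_mul_abs_self]; ring
      rw [abs_mul_abs_self, h2] at h1; linarith
    have h2 : 3 * b ^ 2 / (2 * a ^ 2) ≤ (3/2) * a^4 := by
      rw [div_le_iff₀ (by positivity)]
      nlinarith [sq_nonneg a]
    linarith

lemma wang_le_ball (z : EuclideanSpace ℝ (Fin 2)) (h1 : ‖z‖ ≤ 1) :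
    wangU z ≤ (5/2) * ‖z‖ ^ ((4:ℝ)/3) := by
  set n := ‖z‖ with hn
  have hn0 : 0 ≤ n := norm_nonneg z
  have ha : |z 0| ≤ n := coordW_le z 0
  have hb : |z 1| ≤ n := coordW_le z 1
  unfold wangU
  split
  next h =>
    rcases eq_or_ne (z 0) 0 with h0 | h0
    · have hb0 : z 1 = 0 := by
        have h' : |z 1| ≤ 0 := by simpa [h0] using h
        simpa using le_antisymm h' (abs_nonneg _)
      rw [h0, hb0]
      have : (0:ℝ) ≤ n ^ ((4:ℝ)/3) := Real.rpow_nonneg hn0 _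
      simp; linarith
    · have key : (z 0)^4 + 3*(z 1)^2/(2*(z 0)^2) ≤ (5/2) * (z 0)^4 := region1W _ _ h
      have h4 : (z 0)^4 = |z 0| ^ ((4:ℝ)) := by
        rw [show ((4:ℝ)) = ((4:ℕ):ℝ) by norm_num, Real.rpow_natCast, ← abs_pow,
          abs_of_nonneg (by positivity : (0:ℝ) ≤ (z 0)^4)]
      have hpos : 0 < |z 0| := abs_pos.mpr h0
      have h5 : |z 0| ^ ((4:ℝ)) ≤ |z 0| ^ ((4:ℝ)/3) :=
        Real.rpow_le_rpow_of_exponent_ge hpos (le_trans ha h1) (by norm_num)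
      have h6 : |z 0| ^ ((4:ℝ)/3) ≤ n ^ ((4:ℝ)/3) :=
        Real.rpow_le_rpow (abs_nonneg _) ha (by norm_num)
      calc (z 0)^4 + 3*(z 1)^2/(2*(z 0)^2) ≤ (5/2) * (z 0)^4 := key
        _ ≤ (5/2) * n ^ ((4:ℝ)/3) := by rw [h4]; linarith
  next h =>
    rcases eq_or_ne n 0 with h0 | h0
    · exfalso
      have e1 : z 1 = 0 := by
        have := h0 ▸ hb; simpa using le_antisymm this (abs_nonneg _)
      have e0 : z 0 = 0 := by
        have := h0 ▸ ha; simpa using le_antisymm this (abs_nonneg _)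
      apply h; simp [e0, e1]
    · have hnpos : 0 < n := lt_of_le_of_ne hn0 (Ne.symm h0)
      have e1 : (z 0)^2 ≤ n^(2:ℝ) := by
        rw [Real.rpow_two]
        calc (z 0)^2 = |z 0|^2 := (sq_abs _).symm
          _ ≤ n^2 := by nlinarith [abs_nonneg (z 0)]
      have e2 : n^(2:ℝ) ≤ n^((2:ℝ)/3) := Real.rpow_le_rpow_of_exponent_ge hnpos h1 (by norm_num)
      have e3 : |z 1| ^ ((2:ℝ)/3) ≤ n ^ ((2:ℝ)/3) := Real.rpow_le_rpow (abs_nonneg _) hb (by norm_num)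
      have e4 : |z 1| ^ ((4:ℝ)/3) ≤ n ^ ((4:ℝ)/3) := Real.rpow_le_rpow (abs_nonneg _) hb (by norm_num)
      have e5 : n ^ ((2:ℝ)/3) * n ^ ((2:ℝ)/3) = n ^ ((4:ℝ)/3) := by
        rw [← Real.rpow_add hnpos]; norm_num
      have e6 : (0:ℝ) ≤ |z 1| ^ ((2:ℝ)/3) := Real.rpow_nonneg (abs_nonneg _) _
      have e7 : (0:ℝ) ≤ n ^ ((2:ℝ)/3) := Real.rpow_nonneg hn0 _
      calc (1/2) * (z 0)^2 * |z 1| ^ ((2:ℝ)/3) + 2 * |z 1| ^ ((4:ℝ)/3)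
          ≤ (1/2) * (n^((2:ℝ)/3)) * (n ^ ((2:ℝ)/3)) + 2 * n ^ ((4:ℝ)/3) := by
            have e8 : (z 0)^2 ≤ n^((2:ℝ)/3) := le_trans e1 e2
            have e9 : (z 0)^2 * |z 1| ^ ((2:ℝ)/3) ≤ n ^ ((2:ℝ)/3) * n ^ ((2:ℝ)/3) :=
              mul_le_mul e8 e3 e6 e7
            linarith
        _ = (5/2) * n ^ ((4:ℝ)/3) := by rw [mul_assoc, e5]; ring

lemma wang_hasFDeriv : HasFDerivAt wangU (0 : EuclideanSpace ℝ (Fin 2) →L[ℝ] ℝ) 0 := by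
  rw [hasFDerivAt_iff_isLittleO_nhds_zero]
  simp only [zero_add, wang_zero, sub_zero, ContinuousLinearMap.zero_apply]
  rw [Asymptotics.isLittleO_iff]
  intro c hc
  have hδ : 0 < min 1 ((2*c/5)^3) := by positivity
  filter_upwards [Metric.ball_mem_nhds 0 hδ] with z hz
  rw [Metric.mem_ball, dist_zero_right] at hz
  rcases eq_or_ne z 0 with rfl | hz0
  · simp [wang_zero]
  · have hn0 : (0:ℝ) < ‖z‖ := norm_pos_iff.mpr hz0
    have hn1 : ‖z‖ ≤ 1 := le_of_lt (lt_of_lt_of_le hz (min_le_left _ _))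
    have hn2 : ‖z‖ ≤ (2*c/5)^3 := le_of_lt (lt_of_lt_of_le hz (min_le_right _ _))
    have hb : wangU z ≤ (5/2) * ‖z‖ ^ ((4:ℝ)/3) := wang_le_ball z hn1
    have hsplit : ‖z‖ ^ ((4:ℝ)/3) = ‖z‖ ^ ((1:ℝ)/3) * ‖z‖ := by
      rw [show (4:ℝ)/3 = 1/3 + 1 by norm_num, Real.rpow_add hn0, Real.rpow_one]
    have hc5 : (0:ℝ) ≤ 2*c/5 := by linarith
    have hcube : ((2*c/5)^3 : ℝ) ^ ((1:ℝ)/3) = 2*c/5 := by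
      rw [← Real.rpow_natCast (2*c/5) 3, ← Real.rpow_mul hc5]
      norm_num
    have h13 : ‖z‖ ^ ((1:ℝ)/3) ≤ 2*c/5 := by
      calc ‖z‖ ^ ((1:ℝ)/3) ≤ ((2*c/5)^3 : ℝ) ^ ((1:ℝ)/3) :=
            Real.rpow_le_rpow (le_of_lt hn0) hn2 (by norm_num)
        _ = 2*c/5 := hcube
    rw [Real.norm_of_nonneg (wang_nonneg z)]
    calc wangU z ≤ (5/2) * (‖z‖ ^ ((1:ℝ)/3) * ‖z‖) := by rw [← hsplit]; exact hb
      _ ≤ (5/2) * ((2*c/5) * ‖z‖) := by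
          have := mul_le_mul_of_nonneg_right h13 (le_of_lt hn0)
          nlinarith
      _ = c * ‖z‖ := by ring

lemma wang_le_sphere (r : ℝ) (z : EuclideanSpace ℝ (Fin 2)) (hz : ‖z‖ = r) :
    wangU z ≤ (5/2) * r^4 + (1/2) * r^2 * r^((2:ℝ)/3) + 2 * r^((4:ℝ)/3) := by
  have hr0 : 0 ≤ r := hz ▸ norm_nonneg z
  have ha : |z 0| ≤ r := hz ▸ coordW_le z 0
  have hb : |z 1| ≤ r := hz ▸ coordW_le z 1
  have t1 : (0:ℝ) ≤ r^((2:ℝ)/3) := Real.rpow_nonneg hr0 _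
  have t2 : (0:ℝ) ≤ r^((4:ℝ)/3) := Real.rpow_nonneg hr0 _
  unfold wangU
  split
  next h =>
    have key := region1W (z 0) (z 1) h
    have h4 : (z 0)^4 ≤ r^4 := by
      calc (z 0)^4 = |z 0|^4 := by rw [← abs_pow, abs_of_nonneg (by positivity)]
        _ ≤ r^4 := pow_le_pow_left₀ (abs_nonneg _) ha 4
    nlinarith [sq_nonneg r]
  next h =>
    have e1 : (z 0)^2 ≤ r^2 := by
      calc (z 0)^2 = |z 0|^2 := (sq_abs _).symm
        _ ≤ r^2 := pow_le_pow_left₀ (abs_nonneg _) ha 2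
    have e3 : |z 1| ^ ((2:ℝ)/3) ≤ r ^ ((2:ℝ)/3) := Real.rpow_le_rpow (abs_nonneg _) hb (by norm_num)
    have e4 : |z 1| ^ ((4:ℝ)/3) ≤ r ^ ((4:ℝ)/3) := Real.rpow_le_rpow (abs_nonneg _) hb (by norm_num)
    have e6 : (0:ℝ) ≤ |z 1| ^ ((2:ℝ)/3) := Real.rpow_nonneg (abs_nonneg _) _
    have e9 : (z 0)^2 * |z 1| ^ ((2:ℝ)/3) ≤ r^2 * r ^ ((2:ℝ)/3) :=
      mul_le_mul e1 e3 e6 (by positivity)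
    nlinarith [pow_nonneg hr0 4]

theorem stmt4 :
    wangU 0 = 0 ∧ fderiv ℝ wangU 0 = 0 ∧
    (∀ r : ℝ, 1 ≤ r →
      (∃ z : EuclideanSpace ℝ (Fin 2), ‖z‖ = r ∧ wangU z ≤ 2 * r ^ ((4 : ℝ) / 3)) ∧
      (∃ z : EuclideanSpace ℝ (Fin 2), ‖z‖ = r ∧ r ^ 4 ≤ wangU z)) ∧
    ¬ ∃ H : ℝ, 1 ≤ H ∧ ∀ r : ℝ, 0 < r →
      sSup (wangU '' Metric.sphere (0 : EuclideanSpace ℝ (Fin 2)) r) ≤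
        H * sInf (wangU '' Metric.sphere (0 : EuclideanSpace ℝ (Fin 2)) r) := by
  refine ⟨wang_zero, wang_hasFDeriv.fderiv, ?_, ?_⟩
  · intro r hr
    have hr0 : (0:ℝ) ≤ r := by linarith
    exact ⟨⟨zvW 0 r, zvWB_norm r hr0, le_of_eq (wangB r hr)⟩,
           ⟨zvW r 0, zvWA_norm r hr0, le_of_eq (wangA r).symm⟩⟩
  · rintro ⟨H, hH, hcl⟩
    have hH0 : (0:ℝ) ≤ H := by linarith
    set r : ℝ := 2*H + 1 with hrdef
    have hr1 : (1:ℝ) ≤ r := by rw [hrdef]; linarith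
    have hr0 : (0:ℝ) ≤ r := by linarith
    have hrpos : (0:ℝ) < r := by linarith
    set S := wangU '' Metric.sphere (0 : EuclideanSpace ℝ (Fin 2)) r with hS
    have memA : wangU (zvW r 0) ∈ S :=
      ⟨zvW r 0, by simp [mem_sphere_zero_iff_norm, zvWA_norm r hr0], rfl⟩
    have memB : wangU (zvW 0 r) ∈ S :=
      ⟨zvW 0 r, by simp [mem_sphere_zero_iff_norm, zvWB_norm r hr0], rfl⟩
    have bddA : BddAbove S := by
      refine ⟨(5/2) * r^4 + (1/2) * r^2 * r^((2:ℝ)/3) + 2 * r^((4:ℝ)/3), ?_⟩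
      rintro y ⟨z, hz, rfl⟩
      exact wang_le_sphere r z (mem_sphere_zero_iff_norm.mp hz)
    have bddB : BddBelow S := ⟨0, by rintro y ⟨z, hz, rfl⟩; exact wang_nonneg z⟩
    have hsup : r^4 ≤ sSup S := by
      rw [← wangA r]; exact le_csSup bddA memA
    have hinf : sInf S ≤ 2 * r^((4:ℝ)/3) := by
      rw [← wangB r hr1]; exact csInf_le bddB memB
    have hchain : r^4 ≤ H * (2 * r^((4:ℝ)/3)) :=
      le_trans hsup (le_trans (hcl r hrpos) (mul_le_mul_of_nonneg_left hinf hH0))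
    have hs2 : r ^ ((4:ℝ)/3) ≤ r^2 := by
      have := Real.rpow_le_rpow_of_exponent_le hr1 (by norm_num : (4:ℝ)/3 ≤ 2)
      rwa [Real.rpow_two] at this
    have hs0 : (0:ℝ) ≤ r^((4:ℝ)/3) := Real.rpow_nonneg hr0 _
    have h1 : H * (2 * r^((4:ℝ)/3)) ≤ 2 * H * r^2 := by nlinarith
    have h2 : r^4 ≤ 2 * H * r^2 := le_trans hchain h1
    rw [hrdef] at h2
    nlinarith [sq_nonneg H, hH]
end

section
/- Let X be a set and S : X × ℝ₊ → 𝒫(X) a set-valued map such that: (P1) ⋂_{s>0} S(x,s) = {x} for all x; (P3) s ≤ s' implies S(x,s) ⊆ S(x,s'); (P4) there exists H ≥ 1 such that for all s > 0 and y ∈ S(x,s), both S(x,s) ⊆ S(y,Hs) and S(y,s) ⊆ S(x,Hs). Assume moreover x ∈ S(x,s) for all s > 0 and that for all x,y there exists s with x ∈ S(y,s) and y ∈ S(x,s). Then d(x,y) := inf{s > 0 : x ∈ S(y,s) and y ∈ S(x,s)} is a quasi-metric: d(x,y) ≥ 0 with d(x,y) = 0 iff x = y, d(x,y) = d(y,x),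 and there exists a constant C ≥ 1 such that d(x,z) ≤ C(d(x,y) + d(y,z)) for all x,y,z. -/
/-- A family of "sections" satisfying (P1), (P3), (P4) (plus `x ∈ S(x,s)` and
mutual absorption) induces a quasi-metric. -/
theorem stmt6 {X : Type*} (S : X → ℝ → Set X)
    (hP1 : ∀ x : X, ⋂ s ∈ Set.Ioi (0 : ℝ), S x s = {x})
    (hP3 : ∀ (x : X) (s s' : ℝ), 0 < s → s ≤ s' → S x s ⊆ S x s')
    (H : ℝ) (hH : 1 ≤ H)
    (hP4 : ∀ (x y : X) (s : ℝ), 0 < s → y ∈ S x s →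
      S x s ⊆ S y (H * s) ∧ S y s ⊆ S x (H * s))
    (hself : ∀ (x : X) (s : ℝ), 0 < s → x ∈ S x s)
    (hex : ∀ x y : X, ∃ s : ℝ, 0 < s ∧ x ∈ S y s ∧ y ∈ S x s) :
    let d : X → X → ℝ := fun x y => sInf {s : ℝ | 0 < s ∧ x ∈ S y s ∧ y ∈ S x s}
    (∀ x y, 0 ≤ d x y) ∧ (∀ x y, d x y = 0 ↔ x = y) ∧ (∀ x y, d x y = d y x) ∧
      ∃ C : ℝ, 1 ≤ C ∧ ∀ x y z, d x z ≤ C * (d x y + d y z) := by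
  intro d
  have hH0 : (0:ℝ) < H := lt_of_lt_of_le one_pos hH
  have hne : ∀ x y : X, {s : ℝ | 0 < s ∧ x ∈ S y s ∧ y ∈ S x s}.Nonempty := by
    intro x y; obtain ⟨s, hs⟩ := hex x y; exact ⟨s, hs⟩
  have hbdd : ∀ x y : X, BddBelow {s : ℝ | 0 < s ∧ x ∈ S y s ∧ y ∈ S x s} :=
    fun x y => ⟨0, fun s hs => hs.1.le⟩
  have hnonneg : ∀ x y, 0 ≤ d x y := fun x y =>
    le_csInf (hne x y) (fun s hs => hs.1.le)
  have hsymm : ∀ x y, d x y = d y x := by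
    intro x y
    show sInf _ = sInf _
    congr 1
    ext s
    exact ⟨fun ⟨h1, h2, h3⟩ => ⟨h1, h3, h2⟩, fun ⟨h1, h2, h3⟩ => ⟨h1, h3, h2⟩⟩
  have hmem : ∀ x y s, d x y < s → (x ∈ S y s ∧ y ∈ S x s) := by
    intro x y s hs
    obtain ⟨t, ht, hts⟩ := exists_lt_of_csInf_lt (hne x y) hs
    exact ⟨hP3 y t s ht.1 hts.le ht.2.1, hP3 x t s ht.1 hts.le ht.2.2⟩
  refine ⟨hnonneg, ?_, hsymm, H, hH, ?_⟩
  · intro x y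
    constructor
    · intro h0
      have hx : x ∈ ⋂ s ∈ Set.Ioi (0 : ℝ), S y s := by
        simp only [Set.mem_iInter, Set.mem_Ioi]
        intro s hs
        exact (hmem x y s (h0 ▸ hs)).1
      rw [hP1 y] at hx
      exact hx
    · rintro rfl
      have hset : {s : ℝ | 0 < s ∧ x ∈ S x s ∧ x ∈ S x s} = Set.Ioi 0 := by
        ext s
        simp only [Set.mem_setOf_eq, Set.mem_Ioi]
        exact ⟨fun h => h.1, fun h => ⟨h, hself x s h, hself x s h⟩⟩
      show sInf _ = 0
      rw [hset, csInf_Ioi]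
  · intro x y z
    refine le_of_forall_pos_le_add fun ε hε => ?_
    have hε2 : 0 < ε / (2 * H) := by positivity
    obtain ⟨s, hs, hslt⟩ := exists_lt_of_csInf_lt (hne x y)
      (lt_add_of_pos_right (d x y) hε2)
    obtain ⟨t, ht, htlt⟩ := exists_lt_of_csInf_lt (hne y z)
      (lt_add_of_pos_right (d y z) hε2)
    have hst : 0 < s + t := add_pos hs.1 ht.1
    -- y ∈ S x (s+t) and z ∈ S y (s+t)
    have hy : y ∈ S x (s + t) := hP3 x s (s + t) hs.1 (le_add_of_nonneg_right ht.1.le) hs.2.2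
    have hz : z ∈ S y (s + t) := hP3 y t (s + t) ht.1 (le_add_of_nonneg_left hs.1.le) ht.2.2
    have hxy : x ∈ S y (s + t) := hP3 y s (s + t) hs.1 (le_add_of_nonneg_right ht.1.le) hs.2.1
    have hyz : y ∈ S z (s + t) := hP3 z t (s + t) ht.1 (le_add_of_nonneg_left hs.1.le) ht.2.1
    have h1 : z ∈ S x (H * (s + t)) := (hP4 x y (s + t) hst hy).2 hz
    have h2 : x ∈ S z (H * (s + t)) := (hP4 z y (s + t) hst hyz).2 hxy
    have hdxz : d x z ≤ H * (s + t) :=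
      csInf_le (hbdd x z) ⟨by positivity, h2, h1⟩
    calc d x z ≤ H * (s + t) := hdxz
      _ ≤ H * ((d x y + ε / (2 * H)) + (d y z + ε / (2 * H))) := by
          apply mul_le_mul_of_nonneg_left _ hH0.le
          exact add_le_add hslt.le htlt.le
      _ = H * (d x y + d y z) + ε := by
          field_simp
          ring
end
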